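/- arXiv:1203.4580 — 6 statements merged into one kernel-verified Lean document; each statement's English description precedes it below -/
import Mathlib

section
/- If x* is an optimal solution of the problem of minimizing a continuously differentiable function f : ℝ^n → ℝ over the set C_s = {x : ‖x‖₀ ≤ s}, then x* is a basic feasible vector: if ‖x*‖₀ < s then ∇f(x*) = 0, and if ‖x*‖₀ = s then ∇ᵢf(x*) = 0 for every index i in the support of x*. -/
noncomputable section
open scoped RealInnerProductSpace

/-- the number of nonzero components of `x` -/
def norm0 {n : ℕ} (x : EuclideanSpace ℝ (Fin n)) : ℕ :=
  (Finset.univ.filter fun i => x i ≠ 0).card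

/-- the sparsity constraint set `C_s` -/
def Cs (n s : ℕ) : Set (EuclideanSpace ℝ (Fin n)) := {x | norm0 x ≤ s}

/-- the set-valued Euclidean projection onto `Cs n s` -/
def projCs (n s : ℕ) (w : EuclideanSpace ℝ (Fin n)) : Set (EuclideanSpace ℝ (Fin n)) :=
  {y | y ∈ Cs n s ∧ ∀ z ∈ Cs n s, ‖y - w‖ ≤ ‖z - w‖}

/-- the s-th largest absolute value of a component of `x` -/
def Msval {n : ℕ} (s : ℕ) (x : EuclideanSpace ℝ (Fin n)) : ℝ :=
  (((List.ofFn fun i => |x i|).mergeSort (· ≥ ·)).getD (s - 1) 0)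

/-!
If `x*` minimizes `f` over `C_s`, then moving a single coordinate `i` keeps the point in `C_s`
whenever `i` already lies in the support of `x*` or the support has room for one more index.
Hence `t ↦ f (x* + t eᵢ)` has a global minimum at `t = 0`, so `∂ᵢ f (x*) = 0` by Fermat's rule.
-/

lemma fderiv_apply_eq_zero_of_forall_le_add_smul {E : Type*} [NormedAddCommGroup E]
    [NormedSpace ℝ E] {f : E → ℝ} {x v : E} (hf : DifferentiableAt ℝ f x)
    (hmin : ∀ t : ℝ, f x ≤ f (x + t • v)) : fderiv ℝ f x v = 0 := by
  have hline : HasDerivAt (fun t : ℝ => x + t • v) v 0 := by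
    simpa using ((hasDerivAt_id (0 : ℝ)).smul_const v).const_add x
  have hderiv : HasDerivAt (fun t : ℝ => f (x + t • v)) (fderiv ℝ f x v) 0 := by
    refine HasFDerivAt.comp_hasDerivAt (0 : ℝ) ?_ hline
    simpa using hf.hasFDerivAt
  have hlocmin : IsLocalMin (fun t : ℝ => f (x + t • v)) 0 :=
    Filter.Eventually.of_forall fun t => by simpa using hmin t
  exact hlocmin.hasDerivAt_eq_zero hderiv

lemma gradient_apply_eq_fderiv_single {n : ℕ} (f : EuclideanSpace ℝ (Fin n) → ℝ)
    (x : EuclideanSpace ℝ (Fin n)) (i : Fin n) :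
    gradient f x i = fderiv ℝ f x (EuclideanSpace.single i 1) := by
  rw [← inner_gradient_left, EuclideanSpace.inner_single_right]
  simp

lemma support_add_smul_single_subset {n : ℕ} (x : EuclideanSpace ℝ (Fin n)) (i : Fin n)
    (t : ℝ) :
    Finset.univ.filter (fun j => (x + t • EuclideanSpace.single i (1 : ℝ)) j ≠ 0) ⊆
      insert i (Finset.univ.filter fun j => x j ≠ 0) := by
  intro j hj
  by_cases hji : j = i
  · simp [hji]
  · simp_all

lemma add_smul_single_mem_Cs {n s : ℕ} {x : EuclideanSpace ℝ (Fin n)} (hx : x ∈ Cs n s)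
    {i : Fin n} (hi : norm0 x < s ∨ x i ≠ 0) (t : ℝ) :
    x + t • EuclideanSpace.single i 1 ∈ Cs n s := by
  have hcard := Finset.card_le_card (support_add_smul_single_subset x i t)
  rcases hi with hroom | hsupp
  · exact hcard.trans ((Finset.card_insert_le _ _).trans hroom)
  · rw [Finset.insert_eq_of_mem (by simpa using hsupp)] at hcard
    exact hcard.trans hx

lemma gradient_apply_eq_zero_of_isMinOn_Cs {n s : ℕ} {f : EuclideanSpace ℝ (Fin n) → ℝ}
    {xs : EuclideanSpace ℝ (Fin n)} (hf : DifferentiableAt ℝ f xs) (hxs : xs ∈ Cs n s)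
    (hopt : IsMinOn f (Cs n s) xs) {i : Fin n} (hi : norm0 xs < s ∨ xs i ≠ 0) :
    gradient f xs i = 0 := by
  rw [gradient_apply_eq_fderiv_single]
  exact fderiv_apply_eq_zero_of_forall_le_add_smul hf
    fun t => isMinOn_iff.1 hopt _ (add_smul_single_mem_Cs hxs hi t)

theorem stmt0_general {n s : ℕ}
    (f : EuclideanSpace ℝ (Fin n) → ℝ) (hf : ContDiff ℝ 1 f)
    (xs : EuclideanSpace ℝ (Fin n)) (hxs : xs ∈ Cs n s)
    (hopt : ∀ x ∈ Cs n s, f xs ≤ f x) :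
    (norm0 xs < s → gradient f xs = 0) ∧
    (norm0 xs = s → ∀ i, xs i ≠ 0 → gradient f xs i = 0) := by
  have hdiff : DifferentiableAt ℝ f xs := hf.differentiable one_ne_zero xs
  have hmin : IsMinOn f (Cs n s) xs := isMinOn_iff.2 hopt
  refine ⟨fun hroom => ?_, fun _ i hi => ?_⟩
  · ext i
    simpa using gradient_apply_eq_zero_of_isMinOn_Cs hdiff hxs hmin (Or.inl hroom)
  · exact gradient_apply_eq_zero_of_isMinOn_Cs hdiff hxs hmin (Or.inr hi)

/-- An optimal solution of (P) is a basic feasible vector. -/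
theorem stmt0 {n s : ℕ} (hs : 0 < s) (hsn : s < n)
    (f : EuclideanSpace ℝ (Fin n) → ℝ) (hf : ContDiff ℝ 1 f)
    (xs : EuclideanSpace ℝ (Fin n)) (hxs : xs ∈ Cs n s)
    (hopt : ∀ x ∈ Cs n s, f xs ≤ f x) :
    (norm0 xs < s → gradient f xs = 0) ∧
    (norm0 xs = s → ∀ i, xs i ≠ 0 → gradient f xs i = 0) :=
  stmt0_general f hf xs hxs hopt
end
end

section
/- Any L-stationary point of the sparsity-constrained problem is a basic feasible vector: if x* ∈ C_s satisfies x* ∈ P_{C_s}(x* − (1/L)∇f(x*)) for some L > 0, then ∇ᵢf(x*) = 0 for all i in the support of x*, and ∇f(x*) = 0 when ‖x*‖₀ < s. -/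
noncomputable section
open scoped RealInnerProductSpace

/-! Overwriting a coordinate `i` of a projection `x` of `w` onto `C_s` by `w i` lowers the distance
to `w` by exactly `(x i - w i)²`. Whenever `i` lies in the support of `x`, or `x` has fewer than `s`
nonzero entries, the modified vector is still in `C_s`, so minimality of `x` forces `x i = w i`.
For `w = x - (1/L) ∇f(x)` this says `∇ᵢf(x) = 0`. -/

theorem EuclideanSpace.norm_update_sub_sq_add {ι : Type*} [Fintype ι] [DecidableEq ι]
    (x w : EuclideanSpace ℝ ι) (i : ι) :
    ‖WithLp.toLp 2 (Function.update x.ofLp i (w i)) - w‖ ^ 2 + (x i - w i) ^ 2 = ‖x - w‖ ^ 2 := by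
  simp only [EuclideanSpace.norm_sq_eq, PiLp.sub_apply, Real.norm_eq_abs, sq_abs]
  rw [← Finset.sum_erase_add _ _ (Finset.mem_univ i), ← Finset.sum_erase_add _ _ (Finset.mem_univ i),
    Finset.sum_congr rfl fun j hj => by rw [Function.update_of_ne (Finset.ne_of_mem_erase hj)]]
  simp

theorem norm0_update_le {n : ℕ} (x : EuclideanSpace ℝ (Fin n)) (i : Fin n) (a : ℝ) :
    norm0 (WithLp.toLp 2 (Function.update x.ofLp i a)) ≤
      (insert i (Finset.univ.filter fun j => x j ≠ 0)).card := by
  refine Finset.card_le_card fun j hj => ?_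
  by_cases hji : j = i
  · simp [hji]
  · simp_all

theorem update_mem_Cs {n s : ℕ} {x : EuclideanSpace ℝ (Fin n)} (hx : x ∈ Cs n s) {i : Fin n}
    (hi : x i ≠ 0 ∨ norm0 x < s) (a : ℝ) :
    WithLp.toLp 2 (Function.update x.ofLp i a) ∈ Cs n s := by
  refine (norm0_update_le x i a).trans ?_
  rcases hi with hi | hi
  · rw [Finset.insert_eq_of_mem (Finset.mem_filter.2 ⟨Finset.mem_univ i, hi⟩)]
    exact hx
  · exact (Finset.card_insert_le _ _).trans hi

theorem apply_eq_of_mem_projCs {n s : ℕ} {x w : EuclideanSpace ℝ (Fin n)}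
    (hx : x ∈ projCs n s w) {i : Fin n} (hi : x i ≠ 0 ∨ norm0 x < s) : x i = w i := by
  have hle := hx.2 _ (update_mem_Cs hx.1 hi (w i))
  have hsq := pow_le_pow_left₀ (norm_nonneg _) hle 2
  rw [← EuclideanSpace.norm_update_sub_sq_add x w i] at hsq
  have : (x i - w i) ^ 2 = 0 := le_antisymm (by linarith) (sq_nonneg _)
  exact sub_eq_zero.1 (pow_eq_zero_iff two_ne_zero |>.1 this)

theorem stmt3_general {n s : ℕ} (f : EuclideanSpace ℝ (Fin n) → ℝ)
    (L : ℝ) (hL : 0 < L) (xs : EuclideanSpace ℝ (Fin n))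
    (hstat : xs ∈ projCs n s (xs - (1 / L) • gradient f xs)) :
    (∀ i, xs i ≠ 0 → gradient f xs i = 0) ∧
    (norm0 xs < s → gradient f xs = 0) := by
  have key : ∀ i, xs i ≠ 0 ∨ norm0 xs < s → gradient f xs i = 0 := fun i hi => by
    have hfix := apply_eq_of_mem_projCs hstat hi
    simp only [PiLp.sub_apply, PiLp.smul_apply, smul_eq_mul] at hfix
    have : 1 / L * gradient f xs i = 0 := by linarith
    exact (mul_eq_zero.1 this).resolve_left (by positivity)
  exact ⟨fun i hi => key i (.inl hi), fun hs => by ext i; exact key i (.inr hs)⟩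

/-- Any L-stationary point is a basic feasible vector. -/
theorem stmt3 {n s : ℕ} (f : EuclideanSpace ℝ (Fin n) → ℝ) (hf : ContDiff ℝ 1 f)
    (L : ℝ) (hL : 0 < L) (xs : EuclideanSpace ℝ (Fin n)) (hxs : xs ∈ Cs n s)
    (hstat : xs ∈ projCs n s (xs - (1 / L) • gradient f xs)) :
    (∀ i, xs i ≠ 0 → gradient f xs i = 0) ∧
    (norm0 xs < s → gradient f xs = 0) :=
  stmt3_general f L hL xs hstat
end
end

section
/- Suppose ∇f is Lipschitz with constant L(f) and L > L(f). Then for any x ∈ C_s and any y ∈ P_{C_s}(x − (1/L)∇f(x)), one has f(x) − f(y) ≥ ((L − L(f))/2)‖x − y‖². -/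
noncomputable section
open scoped RealInnerProductSpace

/-!
Since `x ∈ C_s` and `y` is a point of `C_s` nearest to `w = x - (1/L) ∇f(x)`, the inequality
`‖y - w‖ ≤ ‖x - w‖` expands to `⟪∇f(x), y - x⟫ ≤ -(L/2) ‖y - x‖²`: the quadratic model
`h_L(·, x)` is at least as small at `y` as at `x`. The descent lemma
`f(y) ≤ f(x) + ⟪∇f(x), y - x⟫ + (L(f)/2) ‖y - x‖²` turns this into the claimed decrease.
-/

section Descent

variable {E : Type*} [NormedAddCommGroup E] [InnerProductSpace ℝ E] [CompleteSpace E]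
  {f : E → ℝ}

theorem Differentiable.hasDerivAt_comp_add_smul (hf : Differentiable ℝ f) (x v : E) (t : ℝ) :
    HasDerivAt (fun t : ℝ => f (x + t • v)) ⟪gradient f (x + t • v), v⟫ t := by
  have hline : HasDerivAt (fun t : ℝ => x + t • v) v t := by
    simpa using ((hasDerivAt_id t).smul_const v).const_add x
  simpa [InnerProductSpace.toDual_apply_apply, Function.comp_def] using
    (hf (x + t • v)).hasGradientAt.hasFDerivAt.comp_hasDerivAt t hline

theorem le_add_inner_gradient_add_half_mul_sq (hf : Differentiable ℝ f) {Lf : ℝ}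
    (hlip : ∀ x y, ‖gradient f x - gradient f y‖ ≤ Lf * ‖x - y‖) (x y : E) :
    f y ≤ f x + ⟪gradient f x, y - x⟫ + Lf / 2 * ‖y - x‖ ^ 2 := by
  set v := y - x
  have hB (t : ℝ) :
      HasDerivAt (fun t : ℝ => f x + t * ⟪gradient f x, v⟫ + Lf / 2 * t ^ 2 * ‖v‖ ^ 2)
        (⟪gradient f x, v⟫ + Lf * t * ‖v‖ ^ 2) t := by
    have := (((hasDerivAt_id' t).mul_const ⟪gradient f x, v⟫).const_add (f x)).add
      (((hasDerivAt_pow 2 t).const_mul (Lf / 2)).mul_const (‖v‖ ^ 2))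
    exact this.congr_deriv (by push_cast; ring)
  have hslope (t : ℝ) (ht : 0 ≤ t) :
      ⟪gradient f (x + t • v), v⟫ ≤ ⟪gradient f x, v⟫ + Lf * t * ‖v‖ ^ 2 := by
    have := calc ⟪gradient f (x + t • v) - gradient f x, v⟫
        ≤ ‖gradient f (x + t • v) - gradient f x‖ * ‖v‖ := real_inner_le_norm _ _
      _ ≤ Lf * ‖t • v‖ * ‖v‖ := by
          gcongr
          simpa using hlip (x + t • v) x
      _ = Lf * t * ‖v‖ ^ 2 := by rw [norm_smul, Real.norm_of_nonneg ht]; ring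
    rw [inner_sub_left] at this
    linarith
  -- compare `t ↦ f (x + t • v)` on `[0, 1]` with a quadratic whose derivative dominates it
  have key := image_le_of_deriv_right_le_deriv_boundary (a := 0) (b := 1)
    (fun t _ => (hf.hasDerivAt_comp_add_smul x v t).continuousAt.continuousWithinAt)
    (fun t _ => (hf.hasDerivAt_comp_add_smul x v t).hasDerivWithinAt)
    (by simp) (fun t _ => (hB t).continuousAt.continuousWithinAt)
    (fun t _ => (hB t).hasDerivWithinAt) (fun t ht => hslope t ht.1)
    (Set.right_mem_Icc.2 zero_le_one)
  simpa [v] using key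

end Descent

theorem inner_le_neg_half_mul_sq_of_norm_sub_le {E : Type*} [NormedAddCommGroup E]
    [InnerProductSpace ℝ E] {L : ℝ} (hL : 0 < L) {g x y : E}
    (h : ‖y - (x - (1 / L) • g)‖ ≤ ‖x - (x - (1 / L) • g)‖) :
    ⟪g, y - x⟫ ≤ -(L / 2) * ‖y - x‖ ^ 2 := by
  rw [sub_sub_cancel, sub_sub_eq_add_sub, add_sub_right_comm] at h
  have hsq := pow_le_pow_left₀ (norm_nonneg _) h 2
  rw [norm_add_sq_real, real_inner_smul_right, real_inner_comm] at hsq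
  field_simp at hsq
  nlinarith

/-- The sufficient decrease lemma for the hard-thresholding step. -/
theorem stmt6 {n s : ℕ} (f : EuclideanSpace ℝ (Fin n) → ℝ) (hf : ContDiff ℝ 1 f)
    (Lf L : ℝ)
    (hlip : ∀ x y, ‖gradient f x - gradient f y‖ ≤ Lf * ‖x - y‖)
    (hL : Lf < L)
    (x : EuclideanSpace ℝ (Fin n)) (hx : x ∈ Cs n s)
    (y : EuclideanSpace ℝ (Fin n))
    (hy : y ∈ projCs n s (x - (1 / L) • gradient f x)) :
    (L - Lf) / 2 * ‖x - y‖ ^ 2 ≤ f x - f y := by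
  rcases eq_or_ne x y with rfl | hne
  · simp
  have hLf : 0 ≤ Lf := nonneg_of_mul_nonneg_left ((norm_nonneg _).trans (hlip x y))
    (norm_pos_iff.2 (sub_ne_zero.2 hne))
  have hdesc := le_add_inner_gradient_add_half_mul_sq (hf.differentiable one_ne_zero) hlip x y
  have hproj := inner_le_neg_half_mul_sq_of_norm_sub_le (hLf.trans_lt hL) (hy.2 x hx)
  rw [norm_sub_rev] at hdesc hproj
  linarith
end
end

section
/- Any optimal solution of min{f(x) : ‖x‖₀ ≤ s} is a coordinate-wise minimum: if ‖x*‖₀ < s then f(x*) = min_{t∈ℝ} f(x* + t eᵢ) for every i; if ‖x*‖₀ = s then f(x*) ≤ min_{t∈ℝ} f(x* − x*ᵢ eᵢ + t eⱼ) for every i in the support of x* and every j ∈ {1,…,n}. -/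
noncomputable section
open scoped RealInnerProductSpace

/-!
Both perturbations stay in the feasible set `C_s`, so optimality of `x*` over `C_s` applies
to them directly: changing one coordinate raises `‖·‖₀` by at most one, which is harmless when
`‖x*‖₀ < s`, and when `‖x*‖₀ = s` the change of coordinate `j` is paid for by first zeroing
the nonzero coordinate `i`.
-/

namespace norm0

variable {n : ℕ}

theorem add_single_le (x : EuclideanSpace ℝ (Fin n)) (i : Fin n) (t : ℝ) :
    norm0 (x + EuclideanSpace.single i t) ≤ norm0 x + 1 := by
  unfold norm0
  calc (Finset.univ.filter fun k => (x + EuclideanSpace.single i t) k ≠ 0).card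
      ≤ (insert i (Finset.univ.filter fun k => x k ≠ 0)).card := by
        refine Finset.card_le_card fun k hk => ?_
        by_cases hki : k = i
        · simp [hki]
        · simpa [PiLp.single_apply, hki] using hk
    _ ≤ _ := Finset.card_insert_le _ _

theorem sub_single_self_add_one {x : EuclideanSpace ℝ (Fin n)} {i : Fin n} (hi : x i ≠ 0) :
    norm0 (x - EuclideanSpace.single i (x i)) + 1 = norm0 x := by
  unfold norm0
  have hsupp : (Finset.univ.filter fun k => (x - EuclideanSpace.single i (x i)) k ≠ 0) =
      (Finset.univ.filter fun k => x k ≠ 0).erase i := by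
    ext k
    by_cases hki : k = i
    · simp [hki]
    · simp [PiLp.single_apply, hki]
  rw [hsupp, Finset.card_erase_add_one (by simpa using hi)]

theorem sub_single_self_add_single_le {x : EuclideanSpace ℝ (Fin n)} {i : Fin n}
    (hi : x i ≠ 0) (j : Fin n) (t : ℝ) :
    norm0 (x - EuclideanSpace.single i (x i) + EuclideanSpace.single j t) ≤ norm0 x :=
  (add_single_le _ j t).trans (sub_single_self_add_one hi).le

end norm0

theorem stmt8_general {n s : ℕ} (f : EuclideanSpace ℝ (Fin n) → ℝ)
    (xs : EuclideanSpace ℝ (Fin n))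
    (hopt : ∀ x ∈ Cs n s, f xs ≤ f x) :
    (norm0 xs < s → ∀ i : Fin n, ∀ t : ℝ,
      f xs ≤ f (xs + EuclideanSpace.single i t)) ∧
    (norm0 xs = s → ∀ i : Fin n, xs i ≠ 0 → ∀ j : Fin n, ∀ t : ℝ,
      f xs ≤ f (xs - EuclideanSpace.single i (xs i) + EuclideanSpace.single j t)) :=
  ⟨fun hlt i t => hopt _ ((norm0.add_single_le xs i t).trans hlt),
    fun heq _ hi j t => hopt _ ((norm0.sub_single_self_add_single_le hi j t).trans heq.le)⟩

/-- An optimal solution of (P) is a coordinate-wise minimum. -/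
theorem stmt8 {n s : ℕ} (f : EuclideanSpace ℝ (Fin n) → ℝ) (hf : ContDiff ℝ 1 f)
    (xs : EuclideanSpace ℝ (Fin n)) (hxs : xs ∈ Cs n s)
    (hopt : ∀ x ∈ Cs n s, f xs ≤ f x) :
    (norm0 xs < s → ∀ i : Fin n, ∀ t : ℝ,
      f xs ≤ f (xs + EuclideanSpace.single i t)) ∧
    (norm0 xs = s → ∀ i : Fin n, xs i ≠ 0 → ∀ j : Fin n, ∀ t : ℝ,
      f xs ≤ f (xs - EuclideanSpace.single i (xs i) + EuclideanSpace.single j t)) :=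
  stmt8_general f xs hopt
end
end

section
/- Every coordinate-wise minimum of the sparsity-constrained problem is a basic feasible vector: if x* ∈ C_s is a CW-minimum, then ∇ᵢf(x*) = 0 for every i in the support of x* (and ∇f(x*) = 0 in case ‖x*‖₀ < s). -/
noncomputable section
open scoped RealInnerProductSpace

theorem inner_gradient_eq_zero_of_forall_le_add_smul {E : Type*} [NormedAddCommGroup E]
    [InnerProductSpace ℝ E] [CompleteSpace E] {f : E → ℝ} {x : E} (hf : DifferentiableAt ℝ f x)
    (v : E) (hmin : ∀ t : ℝ, f x ≤ f (x + t • v)) : ⟪gradient f x, v⟫ = 0 := by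
  have hline : HasDerivAt (fun t : ℝ => x + t • v) v 0 := by
    simpa using ((hasDerivAt_id (0 : ℝ)).smul_const v).const_add x
  have hfx : HasFDerivAt f (InnerProductSpace.toDual ℝ E (gradient f x)) (x + (0 : ℝ) • v) := by
    simpa using hf.hasGradientAt.hasFDerivAt
  have hderiv : HasDerivAt (fun t : ℝ => f (x + t • v)) ⟪gradient f x, v⟫ 0 :=
    hfx.comp_hasDerivAt (f := fun t : ℝ => x + t • v) 0 hline
  have hlocmin : IsLocalMin (fun t : ℝ => f (x + t • v)) 0 :=
    Filter.Eventually.of_forall fun t => by simpa using hmin t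
  exact hlocmin.hasDerivAt_eq_zero hderiv

theorem EuclideanSpace.gradient_apply_eq_zero_of_forall_le_add_single {ι : Type*} [Fintype ι]
    [DecidableEq ι] {f : EuclideanSpace ℝ ι → ℝ} {x : EuclideanSpace ℝ ι}
    (hf : DifferentiableAt ℝ f x) (i : ι)
    (hmin : ∀ t : ℝ, f x ≤ f (x + EuclideanSpace.single i t)) : gradient f x i = 0 := by
  have hsmul (t : ℝ) : t • EuclideanSpace.single i (1 : ℝ) = EuclideanSpace.single i t := by
    ext j; simp [PiLp.single_apply]
  have h := inner_gradient_eq_zero_of_forall_le_add_smul hf (EuclideanSpace.single i 1)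
    fun t => by simpa only [hsmul] using hmin t
  rw [EuclideanSpace.inner_single_right] at h
  simpa using h

theorem stmt9_general {n s : ℕ} (f : EuclideanSpace ℝ (Fin n) → ℝ) (hf : ContDiff ℝ 1 f)
    (xs : EuclideanSpace ℝ (Fin n))
    (hcw : (norm0 xs < s ∧ ∀ i : Fin n, ∀ t : ℝ,
        f xs ≤ f (xs + EuclideanSpace.single i t)) ∨
      (norm0 xs = s ∧ ∀ i : Fin n, xs i ≠ 0 → ∀ j : Fin n, ∀ t : ℝ,
        f xs ≤ f (xs - EuclideanSpace.single i (xs i) + EuclideanSpace.single j t))) :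
    (∀ i, xs i ≠ 0 → gradient f xs i = 0) ∧
    (norm0 xs < s → gradient f xs = 0) := by
  have hdiff : DifferentiableAt ℝ f xs := hf.differentiable one_ne_zero xs
  rcases hcw with ⟨-, hmin⟩ | ⟨heq, hswap⟩
  · have hgrad : gradient f xs = 0 := by
      ext i
      exact EuclideanSpace.gradient_apply_eq_zero_of_forall_le_add_single hdiff i (hmin i)
    exact ⟨fun i _ => by rw [hgrad]; rfl, fun _ => hgrad⟩
  · refine ⟨fun i hi => ?_, fun hlt => absurd heq hlt.ne⟩
    refine EuclideanSpace.gradient_apply_eq_zero_of_forall_le_add_single hdiff i fun t => ?_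
    have hself : xs - EuclideanSpace.single i (xs i) + EuclideanSpace.single i (xs i + t) =
        xs + EuclideanSpace.single i t := by
      simp only [EuclideanSpace.single, PiLp.single_add]
      abel
    simpa only [hself] using hswap i hi i (xs i + t)

/-- Every coordinate-wise minimum is a basic feasible vector. -/
theorem stmt9 {n s : ℕ} (f : EuclideanSpace ℝ (Fin n) → ℝ) (hf : ContDiff ℝ 1 f)
    (xs : EuclideanSpace ℝ (Fin n)) (hxs : norm0 xs ≤ s)
    (hcw : (norm0 xs < s ∧ ∀ i : Fin n, ∀ t : ℝ,
        f xs ≤ f (xs + EuclideanSpace.single i t)) ∨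
      (norm0 xs = s ∧ ∀ i : Fin n, xs i ≠ 0 → ∀ j : Fin n, ∀ t : ℝ,
        f xs ≤ f (xs - EuclideanSpace.single i (xs i) + EuclideanSpace.single j t))) :
    (∀ i, xs i ≠ 0 → gradient f xs i = 0) ∧
    (norm0 xs < s → gradient f xs = 0) :=
  stmt9_general f hf xs hcw
end
end

section
/- Let a < b be positive numbers and f(x₁,x₂) = a(x₁−1)² + b(x₂−1)² with sparsity level s = 1. Then x̃ = (1,0) is a basic feasible vector which is an L-stationary point for every L ≥ L(f) = 2b, even though the unique optimal solution is (0,1). -/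
/-! The gradient of `f` is `(2a(x₁ - 1), 2b(x₂ - 1))`, so it is `2b`-Lipschitz, and at `x̃ = (1, 0)`
it equals `(0, -2b)`: it vanishes on the support and its off-support entry has size
`2b ≤ L · M₁(x̃) = L`. A point of `C₁` lies on a coordinate axis, where `f ≥ a`, with equality only
at `(0, 1)` because `b > a`. -/

noncomputable section
open scoped RealInnerProductSpace

def xt19 : EuclideanSpace ℝ (Fin 2) := (WithLp.equiv 2 (Fin 2 → ℝ)).symm ![1, 0]
def xopt19 : EuclideanSpace ℝ (Fin 2) := (WithLp.equiv 2 (Fin 2 → ℝ)).symm ![0, 1]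

section SeparableQuadratic

variable {ι : Type*} [Fintype ι]

theorem hasGradientAt_sum_mul_sub_sq (c d : ι → ℝ) (x : EuclideanSpace ℝ ι) :
    HasGradientAt (fun y : EuclideanSpace ℝ ι => ∑ i, c i * (y i - d i) ^ 2)
      (WithLp.toLp 2 fun i => 2 * c i * (x i - d i)) x := by
  rw [hasGradientAt_iff_hasFDerivAt]
  have hterm (i : ι) := (((EuclideanSpace.proj i : EuclideanSpace ℝ ι →L[ℝ] ℝ).hasFDerivAt
    (x := x)).sub_const (d i)).pow 2 |>.const_mul (c i)
  refine (HasFDerivAt.fun_sum fun i _ => hterm i).congr_fderiv ?_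
  ext v
  simp [PiLp.inner_apply, mul_comm, mul_assoc]

theorem EuclideanSpace.norm_le_of_forall_abs_le {C : ℝ} (hC : 0 ≤ C) {v w : EuclideanSpace ℝ ι}
    (h : ∀ i, |w i| ≤ C * |v i|) : ‖w‖ ≤ C * ‖v‖ := by
  refine le_of_sq_le_sq ?_ (by positivity)
  rw [mul_pow, EuclideanSpace.norm_sq_eq, EuclideanSpace.norm_sq_eq, Finset.mul_sum]
  gcongr with i
  simp only [Real.norm_eq_abs, ← mul_pow]
  exact pow_le_pow_left₀ (abs_nonneg _) (h i) 2

theorem norm_gradient_sum_mul_sub_sq_sub_le {c : ι → ℝ} {C : ℝ} (hc : ∀ i, |c i| ≤ C)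
    (d : ι → ℝ) (x y : EuclideanSpace ℝ ι) :
    ‖gradient (fun z : EuclideanSpace ℝ ι => ∑ i, c i * (z i - d i) ^ 2) x -
      gradient (fun z : EuclideanSpace ℝ ι => ∑ i, c i * (z i - d i) ^ 2) y‖ ≤ 2 * C * ‖x - y‖ := by
  rw [(hasGradientAt_sum_mul_sub_sq c d x).gradient, (hasGradientAt_sum_mul_sub_sq c d y).gradient]
  obtain hι | hι := isEmpty_or_nonempty ι
  · simp [Subsingleton.elim x y]
  have hC : 0 ≤ C := (abs_nonneg _).trans (hc (Classical.arbitrary ι))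
  refine EuclideanSpace.norm_le_of_forall_abs_le (by positivity) fun i => ?_
  calc |2 * c i * (x i - d i) - 2 * c i * (y i - d i)| = 2 * |c i| * |x i - y i| := by
        rw [← mul_sub, sub_sub_sub_cancel_right, abs_mul, abs_mul, abs_two]
    _ ≤ 2 * C * |(x - y) i| := by
        rw [PiLp.sub_apply]; gcongr; exact hc i

end SeparableQuadratic

theorem norm0_le_one_iff {n : ℕ} {x : EuclideanSpace ℝ (Fin n)} :
    norm0 x ≤ 1 ↔ ∀ i, x i ≠ 0 → ∀ j, x j ≠ 0 → i = j := by
  simp only [norm0, Finset.card_le_one, Finset.mem_filter, Finset.mem_univ, true_and, ne_eq]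

theorem eq_zero_or_eq_zero_of_mem_Cs_two_one {x : EuclideanSpace ℝ (Fin 2)} (hx : x ∈ Cs 2 1) :
    x 0 = 0 ∨ x 1 = 0 := by
  by_contra! h
  exact absurd (norm0_le_one_iff.mp hx 0 h.1 1 h.2) (by decide)

theorem xt19_zero : xt19 0 = 1 := by simp [xt19]

theorem xt19_one : xt19 1 = 0 := by simp [xt19]

theorem Msval_one_xt19 : Msval 1 xt19 = 1 := by
  simp [Msval, xt19_zero, xt19_one, List.ofFn_succ, List.mergeSort]

theorem le_mul_sub_one_sq_add_mul_sub_one_sq {a b u v : ℝ} (ha : 0 ≤ a) (hab : a < b)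
    (huv : u = 0 ∨ v = 0) :
    a ≤ a * (u - 1) ^ 2 + b * (v - 1) ^ 2 ∧
      (a * (u - 1) ^ 2 + b * (v - 1) ^ 2 ≤ a → u = 0 ∧ v = 1) := by
  rcases huv with rfl | rfl
  · refine ⟨by nlinarith [sq_nonneg (v - 1)], fun h => ⟨rfl, ?_⟩⟩
    have : (v - 1) ^ 2 = 0 := by nlinarith [sq_nonneg (v - 1)]
    linarith [pow_eq_zero_iff (n := 2) two_ne_zero |>.mp this]
  · have : a < a * (u - 1) ^ 2 + b * (0 - 1) ^ 2 := by nlinarith [mul_nonneg ha (sq_nonneg (u - 1))]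
    exact ⟨this.le, fun h => absurd h this.not_ge⟩

/-- For f(x₁,x₂) = a(x₁-1)² + b(x₂-1)² with 0 < a < b and s = 1, the point (1,0) is a BF
vector which is L-stationary for every L ≥ L(f) = 2b, although (0,1) is the unique optimum. -/
theorem stmt19 (a b : ℝ) (ha : 0 < a) (hab : a < b)
    (f : EuclideanSpace ℝ (Fin 2) → ℝ)
    (hfdef : ∀ x, f x = a * (x 0 - 1) ^ 2 + b * (x 1 - 1) ^ 2) :
    (∀ x y, ‖gradient f x - gradient f y‖ ≤ 2 * b * ‖x - y‖) ∧
    (norm0 xt19 ≤ 1 ∧ ∀ i, xt19 i ≠ 0 → gradient f xt19 i = 0) ∧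
    (∀ L : ℝ, 2 * b ≤ L →
      ∀ i, (xt19 i = 0 → |gradient f xt19 i| ≤ L * Msval 1 xt19) ∧
        (xt19 i ≠ 0 → gradient f xt19 i = 0)) ∧
    (∀ x ∈ Cs 2 1, f xopt19 ≤ f x) ∧
    (∀ x ∈ Cs 2 1, f x = f xopt19 → x = xopt19) := by
  have hb : 0 < b := ha.trans hab
  have hf : f = fun x => ∑ i, ![a, b] i * (x i - 1) ^ 2 := by
    funext x; simp [hfdef, Fin.sum_univ_two]
  have hgrad : gradient f xt19 = WithLp.toLp 2 ![0, -(2 * b)] := by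
    rw [hf, (hasGradientAt_sum_mul_sub_sq _ _ xt19).gradient]
    ext i; fin_cases i <;> simp [xt19_zero, xt19_one]
  have hfopt : f xopt19 = a := by simp [hfdef, xopt19]
  have hstat : ∀ i, xt19 i ≠ 0 → gradient f xt19 i = 0 := by
    intro i hi; fin_cases i
    · simp [hgrad]
    · exact absurd xt19_one hi
  refine ⟨?_, ⟨?_, hstat⟩, fun L hL i => ⟨fun hi => ?_, hstat i⟩, fun x hx => ?_, fun x hx hfx => ?_⟩
  · rw [hf]
    refine norm_gradient_sum_mul_sub_sq_sub_le (fun i => ?_) _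
    fin_cases i <;> simp [abs_of_pos ha, abs_of_pos hb, hab.le]
  · exact norm0_le_one_iff.mpr fun i hi j hj => by
      fin_cases i <;> fin_cases j <;> simp_all [xt19_one]
  · fin_cases i
    · exact absurd hi (by simp [xt19_zero])
    · simp [hgrad, Msval_one_xt19, abs_of_pos hb, hL]
  · rw [hfopt, hfdef]
    exact (le_mul_sub_one_sq_add_mul_sub_one_sq ha.le hab (eq_zero_or_eq_zero_of_mem_Cs_two_one hx)).1
  · rw [hfopt, hfdef] at hfx
    obtain ⟨h0, h1⟩ := (le_mul_sub_one_sq_add_mul_sub_one_sq ha.le hab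
      (eq_zero_or_eq_zero_of_mem_Cs_two_one hx)).2 hfx.le
    ext i; fin_cases i <;> simp [xopt19, h0, h1]
end
end
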